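/- arXiv:2106.04186 — 2 statements merged into one kernel-verified Lean document; each statement's English description precedes it below -/
import Mathlib

section
/- Let b : Fin T → E be a sequence in an inner product space E, let b̄ = (1/T)·∑ₜ bₜ be its mean, and let ε : Fin T → ℝ with εₜ > 0 for all t. Then (∑_{t=0}^{T-2} ‖b_{t+1} - bₜ‖ / εₜ)² ≤ 4·(∑_{t=0}^{T-2} εₜ^{-2}) · ∑_{t=0}^{T-1} ‖bₜ - b̄‖². -/
theorem stmt_4 {E : Type*} [NormedAddCommGroup E] [InnerProductSpace ℝ E]
    (T : ℕ) (hT : 1 ≤ T) (b : ℕ → E) (ε : ℕ → ℝ) (hε : ∀ t, 0 < ε t) :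
    (∑ t ∈ Finset.range (T - 1), ‖b (t + 1) - b t‖ / ε t) ^ 2 ≤
      4 * (∑ t ∈ Finset.range (T - 1), ((ε t)⁻¹) ^ 2) *
        ∑ t ∈ Finset.range T, ‖b t - (T : ℝ)⁻¹ • ∑ s ∈ Finset.range T, b s‖ ^ 2 := by
  set m : E := (T : ℝ)⁻¹ • ∑ s ∈ Finset.range T, b s with hm
  set x : ℕ → ℝ := fun t => ‖b t - m‖ with hx
  have hxnn : ∀ t, 0 ≤ x t := fun t => norm_nonneg _
  -- Step 1: pointwise triangle
  have h1 : ∑ t ∈ Finset.range (T - 1), ‖b (t + 1) - b t‖ / ε t ≤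
      ∑ t ∈ Finset.range (T - 1), (x (t + 1) + x t) * (ε t)⁻¹ := by
    apply Finset.sum_le_sum
    intro t _
    rw [div_eq_mul_inv]
    apply mul_le_mul_of_nonneg_right _ (inv_nonneg.mpr (hε t).le)
    calc ‖b (t + 1) - b t‖ = ‖(b (t + 1) - m) - (b t - m)‖ := by abel_nf
      _ ≤ x (t + 1) + x t := norm_sub_le _ _
  have hLnn : 0 ≤ ∑ t ∈ Finset.range (T - 1), ‖b (t + 1) - b t‖ / ε t :=
    Finset.sum_nonneg fun t _ => div_nonneg (norm_nonneg _) (hε t).le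
  have h2 : (∑ t ∈ Finset.range (T - 1), ‖b (t + 1) - b t‖ / ε t) ^ 2 ≤
      (∑ t ∈ Finset.range (T - 1), (x (t + 1) + x t) * (ε t)⁻¹) ^ 2 :=
    pow_le_pow_left₀ hLnn h1 2
  -- Cauchy–Schwarz
  have h3 : (∑ t ∈ Finset.range (T - 1), (x (t + 1) + x t) * (ε t)⁻¹) ^ 2 ≤
      (∑ t ∈ Finset.range (T - 1), (x (t + 1) + x t) ^ 2) *
        ∑ t ∈ Finset.range (T - 1), ((ε t)⁻¹) ^ 2 :=
    Finset.sum_mul_sq_le_sq_mul_sq _ _ _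
  -- Step 3: bound sum of squares
  have hshift : ∑ t ∈ Finset.range (T - 1), x (t + 1) ^ 2 ≤ ∑ t ∈ Finset.range T, x t ^ 2 := by
    have : ∑ t ∈ Finset.range (T - 1), x (t + 1) ^ 2 = ∑ t ∈ Finset.Ico 1 T, x t ^ 2 := by
      rw [Finset.sum_Ico_eq_sum_range]
      simp [add_comm]
    rw [this]
    apply Finset.sum_le_sum_of_subset_of_nonneg
    · intro t ht
      simp only [Finset.mem_Ico] at ht
      exact Finset.mem_range.mpr ht.2
    · intro t _ _
      positivity
  have htail : ∑ t ∈ Finset.range (T - 1), x t ^ 2 ≤ ∑ t ∈ Finset.range T, x t ^ 2 := by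
    apply Finset.sum_le_sum_of_subset_of_nonneg
    · exact Finset.range_subset_range.mpr (Nat.sub_le T 1)
    · intro t _ _; positivity
  have h4 : ∑ t ∈ Finset.range (T - 1), (x (t + 1) + x t) ^ 2 ≤
      4 * ∑ t ∈ Finset.range T, x t ^ 2 := by
    calc ∑ t ∈ Finset.range (T - 1), (x (t + 1) + x t) ^ 2
        ≤ ∑ t ∈ Finset.range (T - 1), (2 * (x (t + 1) ^ 2 + x t ^ 2)) := by
          apply Finset.sum_le_sum
          intro t _
          nlinarith [sq_nonneg (x (t + 1) - x t)]
      _ = 2 * ((∑ t ∈ Finset.range (T - 1), x (t + 1) ^ 2) +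
            ∑ t ∈ Finset.range (T - 1), x t ^ 2) := by
          rw [← Finset.mul_sum, Finset.sum_add_distrib]
      _ ≤ 2 * ((∑ t ∈ Finset.range T, x t ^ 2) + ∑ t ∈ Finset.range T, x t ^ 2) := by
          linarith
      _ = 4 * ∑ t ∈ Finset.range T, x t ^ 2 := by ring
  have hεnn : 0 ≤ ∑ t ∈ Finset.range (T - 1), ((ε t)⁻¹) ^ 2 :=
    Finset.sum_nonneg fun t _ => sq_nonneg _
  calc (∑ t ∈ Finset.range (T - 1), ‖b (t + 1) - b t‖ / ε t) ^ 2
      ≤ (∑ t ∈ Finset.range (T - 1), (x (t + 1) + x t) ^ 2) *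
        ∑ t ∈ Finset.range (T - 1), ((ε t)⁻¹) ^ 2 := h2.trans h3
    _ ≤ (4 * ∑ t ∈ Finset.range T, x t ^ 2) *
        ∑ t ∈ Finset.range (T - 1), ((ε t)⁻¹) ^ 2 :=
        mul_le_mul_of_nonneg_right h4 hεnn
    _ = 4 * (∑ t ∈ Finset.range (T - 1), ((ε t)⁻¹) ^ 2) *
        ∑ t ∈ Finset.range T, x t ^ 2 := by ring
end

section
/- Let (sᵢ)_{i=1}^k and s be elements of {0,1}^{n₁} × ... × {0,1}^{n_m} represented as Kronecker products sᵢ = ⊗_{l=m}^{1} s_{i,l}. Suppose for every layer l, ∑_{i=1}^k s_{i,l} ≥ 1 componentwise. Then there exist binary vectors q_{i,l} ≤ s_{i,l} such that ⊗_{l=m}^{1} (∑_{i=1}^k q_{i,l}) = ⊗_{l=m}^{1} s_l, where s = ⊗_{l=m}^{1} s_l. -/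
theorem stmt_8 (m k : ℕ) (n : Fin m → ℕ)
    (s : Fin k → ∀ l : Fin m, Fin (n l) → ℕ)
    (t : ∀ l : Fin m, Fin (n l) → ℕ)
    (hs : ∀ i l j, s i l j = 0 ∨ s i l j = 1)
    (ht : ∀ l j, t l j = 0 ∨ t l j = 1)
    (hcover : ∀ l j, 1 ≤ ∑ i, s i l j) :
    ∃ q : Fin k → ∀ l : Fin m, Fin (n l) → ℕ,
      (∀ i l j, q i l j ≤ s i l j) ∧ (∀ i l j, q i l j = 0 ∨ q i l j = 1) ∧
      ∀ idx : ∀ l : Fin m, Fin (n l),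
        ∏ l, (∑ i, q i l (idx l)) = ∏ l, t l (idx l) := by
  have hex : ∀ l j, ∃ i, 1 ≤ s i l j := by
    intro l j
    by_contra h
    push_neg at h
    have : ∑ i, s i l j = 0 := Finset.sum_eq_zero (fun i _ => Nat.lt_one_iff.mp (h i))
    have := hcover l j
    omega
  choose f hf using hex
  refine ⟨fun i l j => if t l j = 1 ∧ i = f l j then 1 else 0, ?_, ?_, ?_⟩
  · intro i l j
    by_cases hc : t l j = 1 ∧ i = f l j
    · simpa [hc] using hf l j
    · simp [hc]
  · intro i l j
    by_cases hc : t l j = 1 ∧ i = f l j <;> simp [hc]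
  · intro idx
    refine Finset.prod_congr rfl (fun l _ => ?_)
    by_cases hT : t l (idx l) = 1
    · simp [hT, Finset.sum_ite_eq']
    · have : t l (idx l) = 0 := (ht l (idx l)).resolve_right hT
      simp [hT, this]
end
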